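/- arXiv:0707.3886 — 4 statements merged into one kernel-verified Lean document; each statement's English description precedes it below -/
import Mathlib

section
/- Let y : (0,∞) → (0,∞) be a function satisfying the doubling property: for all θ > 1 and r > 0, (3θ²)⁻¹ y(r) ≤ y(θr) ≤ 2 y(r). Define I(r) = r⁻¹ ∫₀^r y(x)⁻¹ dx and ẏ(r) = I(r)⁻¹. Then for all r > 0, 48⁻¹ ≤ y(r)/ẏ(r) ≤ 2. -/
/-!
For `0 < x < r`, applying the doubling property with `θ = r / x` gives
`y r / 2 ≤ y x ≤ 3 (r / x)² y r`. Integrating the reciprocals over `(0, r)` yields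
`r / (9 y r) ≤ ∫₀^r y⁻¹ ≤ 2 r / y r`, i.e. `1/9 ≤ y r · I r ≤ 2`.
-/

open MeasureTheory intervalIntegral

section Doubling

variable {y : ℝ → ℝ}

lemma inv_le_two_div_of_doubling (hpos : ∀ r > 0, 0 < y r)
    (hup : ∀ θ : ℝ, 1 < θ → ∀ r > 0, y (θ * r) ≤ 2 * y r)
    {x r : ℝ} (hx : 0 < x) (hxr : x < r) :
    (y x)⁻¹ ≤ 2 / y r := by
  have hle : y r ≤ 2 * y x := by
    simpa only [div_mul_cancel₀ r hx.ne'] using hup (r / x) ((one_lt_div hx).mpr hxr) x hx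
  have hyr := hpos r (hx.trans hxr)
  calc (y x)⁻¹ ≤ (y r / 2)⁻¹ := inv_anti₀ (by positivity) (by linarith)
    _ = 2 / y r := inv_div _ _

lemma sq_div_le_inv_of_doubling (hpos : ∀ r > 0, 0 < y r)
    (hlow : ∀ θ : ℝ, 1 < θ → ∀ r > 0, (3 * θ ^ 2)⁻¹ * y r ≤ y (θ * r))
    {x r : ℝ} (hx : 0 < x) (hxr : x < r) :
    x ^ 2 / (3 * r ^ 2 * y r) ≤ (y x)⁻¹ := by
  have hr : 0 < r := hx.trans hxr
  have hle : y x ≤ 3 * (r / x) ^ 2 * y r := by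
    have := hlow (r / x) ((one_lt_div hx).mpr hxr) x hx
    rwa [div_mul_cancel₀ r hx.ne', inv_mul_le_iff₀ (by positivity)] at this
  calc x ^ 2 / (3 * r ^ 2 * y r) = (3 * (r / x) ^ 2 * y r)⁻¹ := by field_simp
    _ ≤ (y x)⁻¹ := inv_anti₀ (hpos x hx) hle

lemma integral_inv_le_of_doubling (hpos : ∀ r > 0, 0 < y r)
    (hup : ∀ θ : ℝ, 1 < θ → ∀ r > 0, y (θ * r) ≤ 2 * y r)
    {r : ℝ} (hr : 0 < r) (hint : IntervalIntegrable (fun x => (y x)⁻¹) volume 0 r) :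
    ∫ x in (0 : ℝ)..r, (y x)⁻¹ ≤ 2 * r / y r := by
  calc ∫ x in (0 : ℝ)..r, (y x)⁻¹ ≤ ∫ _ in (0 : ℝ)..r, 2 / y r :=
        integral_mono_on_of_le_Ioo hr.le hint intervalIntegrable_const
          fun x hx => inv_le_two_div_of_doubling hpos hup hx.1 hx.2
    _ = 2 * r / y r := by rw [intervalIntegral.integral_const, smul_eq_mul]; ring

lemma div_le_integral_inv_of_doubling (hpos : ∀ r > 0, 0 < y r)
    (hlow : ∀ θ : ℝ, 1 < θ → ∀ r > 0, (3 * θ ^ 2)⁻¹ * y r ≤ y (θ * r))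
    {r : ℝ} (hr : 0 < r) (hint : IntervalIntegrable (fun x => (y x)⁻¹) volume 0 r) :
    r / (9 * y r) ≤ ∫ x in (0 : ℝ)..r, (y x)⁻¹ := by
  have hyr := hpos r hr
  calc r / (9 * y r) = ∫ x in (0 : ℝ)..r, x ^ 2 / (3 * r ^ 2 * y r) := by
        rw [intervalIntegral.integral_div, integral_pow]
        field_simp
        ring
    _ ≤ ∫ x in (0 : ℝ)..r, (y x)⁻¹ :=
        integral_mono_on_of_le_Ioo hr.le
          ((by fun_prop : Continuous _).intervalIntegrable _ _) hint
          fun x hx => sq_div_le_inv_of_doubling hpos hlow hx.1 hx.2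

end Doubling

theorem ratio_bound_of_doubling_general
    (y : ℝ → ℝ) (hypos : ∀ r > 0, 0 < y r)
    (hint : ∀ r > 0, IntervalIntegrable (fun x => (y x)⁻¹) MeasureTheory.volume 0 r)
    (hdoub : ∀ θ : ℝ, 1 < θ → ∀ r > 0,
      (3 * θ ^ 2)⁻¹ * y r ≤ y (θ * r) ∧ y (θ * r) ≤ 2 * y r) :
    ∀ r > 0,
      (48 : ℝ)⁻¹ ≤ y r / (r⁻¹ * ∫ x in (0 : ℝ)..r, (y x)⁻¹)⁻¹ ∧
      y r / (r⁻¹ * ∫ x in (0 : ℝ)..r, (y x)⁻¹)⁻¹ ≤ 2 := by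
  intro r hr
  have hyr := hypos r hr
  have hlow := div_le_integral_inv_of_doubling hypos (fun θ hθ r hr => (hdoub θ hθ r hr).1) hr
    (hint r hr)
  have hup := integral_inv_le_of_doubling hypos (fun θ hθ r hr => (hdoub θ hθ r hr).2) hr
    (hint r hr)
  rw [div_inv_eq_mul]
  constructor
  · calc (48 : ℝ)⁻¹ ≤ y r * (r⁻¹ * (r / (9 * y r))) := by field_simp; norm_num
      _ ≤ _ := by gcongr
  · calc y r * (r⁻¹ * ∫ x in (0 : ℝ)..r, (y x)⁻¹) ≤ y r * (r⁻¹ * (2 * r / y r)) := by gcongr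
      _ = 2 := by field_simp

/-- If `y : (0,∞) → (0,∞)` satisfies the doubling property
`(3θ²)⁻¹ y(r) ≤ y(θr) ≤ 2 y(r)`, then with `I(r) = r⁻¹ ∫₀^r y(x)⁻¹ dx` and `ẏ(r) = I(r)⁻¹`,
one has `48⁻¹ ≤ y(r)/ẏ(r) ≤ 2` for all `r > 0`. -/
theorem ratio_bound_of_doubling
    (y : ℝ → ℝ) (hypos : ∀ r > 0, 0 < y r) (hmeas : Measurable y)
    (hint : ∀ r > 0, IntervalIntegrable (fun x => (y x)⁻¹) MeasureTheory.volume 0 r)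
    (hdoub : ∀ θ : ℝ, 1 < θ → ∀ r > 0,
      (3 * θ ^ 2)⁻¹ * y r ≤ y (θ * r) ∧ y (θ * r) ≤ 2 * y r) :
    ∀ r > 0,
      (48 : ℝ)⁻¹ ≤ y r / (r⁻¹ * ∫ x in (0 : ℝ)..r, (y x)⁻¹)⁻¹ ∧
      y r / (r⁻¹ * ∫ x in (0 : ℝ)..r, (y x)⁻¹)⁻¹ ≤ 2 :=
  ratio_bound_of_doubling_general y hypos hint hdoub
end

section
/- Under the hypotheses of the previous statement (y satisfies the doubling property (3θ²)⁻¹ y(r) ≤ y(θr) ≤ 2 y(r) and ẏ(r) = (r⁻¹∫₀^r y(x)⁻¹dx)⁻¹), for all θ > 1 and r > 0: (1/288)·θ⁻² ẏ(r) ≤ ẏ(θr) ≤ 192 ẏ(r). -/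
/-!
Substituting `x ↦ θx` gives `∫₀^{θr} 1/y = θ ∫₀^r 1/y(θx)`, so a pointwise comparison
`c y(x) ≤ y(θx) ≤ K y(x)` integrates to `θK⁻¹ ∫₀^r 1/y ≤ ∫₀^{θr} 1/y ≤ θc⁻¹ ∫₀^r 1/y`, and the
factor `θ` cancels against the normalisation `r⁻¹`. The doubling constants `c = (3θ²)⁻¹`, `K = 2`
thus give `(3θ²)⁻¹ ẏ(r) ≤ ẏ(θr) ≤ 2 ẏ(r)`.
-/

open MeasureTheory Set

theorem integral_zero_mul_eq (f : ℝ → ℝ) (θ r : ℝ) :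
    ∫ x in 0..θ * r, f x = θ * ∫ x in 0..r, f (θ * x) := by
  simp

theorem integral_zero_mul_le_of_comp_mul_le {f : ℝ → ℝ} {θ r C : ℝ} (hθ : 0 < θ) (hr : 0 ≤ r)
    (hfθr : IntervalIntegrable f volume 0 (θ * r)) (hfr : IntervalIntegrable f volume 0 r)
    (h : ∀ x ∈ Ioo 0 r, f (θ * x) ≤ C * f x) :
    ∫ x in 0..θ * r, f x ≤ θ * C * ∫ x in 0..r, f x := by
  have hcomp : IntervalIntegrable (fun x => f (θ * x)) volume 0 r := by
    simpa [hθ.ne'] using hfθr.comp_mul_left (c := θ)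
  calc ∫ x in 0..θ * r, f x = θ * ∫ x in 0..r, f (θ * x) := integral_zero_mul_eq f θ r
    _ ≤ θ * ∫ x in 0..r, C * f x := by
        gcongr
        exact intervalIntegral.integral_mono_on_of_le_Ioo hr hcomp (hfr.const_mul C) h
    _ = θ * C * ∫ x in 0..r, f x := by rw [intervalIntegral.integral_const_mul, mul_assoc]

theorem le_integral_zero_mul_of_le_comp_mul {f : ℝ → ℝ} {θ r c : ℝ} (hθ : 0 < θ) (hr : 0 ≤ r)
    (hfθr : IntervalIntegrable f volume 0 (θ * r)) (hfr : IntervalIntegrable f volume 0 r)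
    (h : ∀ x ∈ Ioo 0 r, c * f x ≤ f (θ * x)) :
    θ * c * ∫ x in 0..r, f x ≤ ∫ x in 0..θ * r, f x := by
  have hcomp : IntervalIntegrable (fun x => f (θ * x)) volume 0 r := by
    simpa [hθ.ne'] using hfθr.comp_mul_left (c := θ)
  calc θ * c * ∫ x in 0..r, f x = θ * ∫ x in 0..r, c * f x := by
        rw [intervalIntegral.integral_const_mul, mul_assoc]
    _ ≤ θ * ∫ x in 0..r, f (θ * x) := by
        gcongr
        exact intervalIntegral.integral_mono_on_of_le_Ioo hr (hfr.const_mul c) hcomp h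
    _ = ∫ x in 0..θ * r, f x := (integral_zero_mul_eq f θ r).symm

/-- `ẏ(r)` of the paper: the harmonic mean of `y` over `[0, r]`. -/
noncomputable def harmonicMean (y : ℝ → ℝ) (r : ℝ) : ℝ :=
  (r⁻¹ * ∫ x in (0 : ℝ)..r, (y x)⁻¹)⁻¹

section HarmonicMean

variable {y : ℝ → ℝ} (hpos : ∀ r > 0, 0 < y r)
  (hint : ∀ r > 0, IntervalIntegrable (fun x => (y x)⁻¹) volume 0 r)
include hpos hint

theorem integral_inv_pos {r : ℝ} (hr : 0 < r) : 0 < ∫ x in 0..r, (y x)⁻¹ :=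
  intervalIntegral.intervalIntegral_pos_of_pos_on (hint r hr)
    (fun x hx => inv_pos.mpr (hpos x hx.1)) hr

theorem harmonicMean_pos {r : ℝ} (hr : 0 < r) : 0 < harmonicMean y r := by
  have := integral_inv_pos hpos hint hr
  unfold harmonicMean
  positivity

theorem harmonicMean_mul_le {θ K : ℝ} (hθ : 0 < θ) (hK : 0 < K)
    (hy : ∀ x > 0, y (θ * x) ≤ K * y x) {r : ℝ} (hr : 0 < r) :
    harmonicMean y (θ * r) ≤ K * harmonicMean y r := by
  have hI := integral_inv_pos hpos hint hr
  have hIθr : θ * K⁻¹ * ∫ x in 0..r, (y x)⁻¹ ≤ ∫ x in 0..θ * r, (y x)⁻¹ := by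
    refine le_integral_zero_mul_of_le_comp_mul hθ hr.le (hint _ (by positivity)) (hint r hr)
      fun x hx => ?_
    rw [← mul_inv]
    exact inv_anti₀ (hpos _ (mul_pos hθ hx.1)) (hy x hx.1)
  calc harmonicMean y (θ * r) = θ * r / ∫ x in 0..θ * r, (y x)⁻¹ := by
        rw [harmonicMean, inv_mul_eq_div, inv_div]
    _ ≤ θ * r / (θ * K⁻¹ * ∫ x in 0..r, (y x)⁻¹) := by gcongr
    _ = K * harmonicMean y r := by
        rw [harmonicMean, inv_mul_eq_div, inv_div]
        field_simp

theorem mul_harmonicMean_le {θ c : ℝ} (hθ : 0 < θ) (hc : 0 < c)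
    (hy : ∀ x > 0, c * y x ≤ y (θ * x)) {r : ℝ} (hr : 0 < r) :
    c * harmonicMean y r ≤ harmonicMean y (θ * r) := by
  have hθr : 0 < θ * r := by positivity
  have hIθr : ∫ x in 0..θ * r, (y x)⁻¹ ≤ θ * c⁻¹ * ∫ x in 0..r, (y x)⁻¹ := by
    refine integral_zero_mul_le_of_comp_mul_le hθ hr.le (hint _ hθr) (hint r hr)
      fun x hx => ?_
    rw [← mul_inv]
    exact inv_anti₀ (mul_pos hc (hpos x hx.1)) (hy x hx.1)
  calc c * harmonicMean y r = θ * r / (θ * c⁻¹ * ∫ x in 0..r, (y x)⁻¹) := by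
        rw [harmonicMean, inv_mul_eq_div, inv_div]
        field_simp
    _ ≤ θ * r / ∫ x in 0..θ * r, (y x)⁻¹ := by
        gcongr
        exact integral_inv_pos hpos hint hθr
    _ = harmonicMean y (θ * r) := by rw [harmonicMean, inv_mul_eq_div, inv_div]

end HarmonicMean

theorem regularized_doubling_general
    (y : ℝ → ℝ) (hypos : ∀ r > 0, 0 < y r)
    (hint : ∀ r > 0, IntervalIntegrable (fun x => (y x)⁻¹) MeasureTheory.volume 0 r)
    (hdoub : ∀ θ : ℝ, 1 < θ → ∀ r > 0,
      (3 * θ ^ 2)⁻¹ * y r ≤ y (θ * r) ∧ y (θ * r) ≤ 2 * y r) :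
    ∀ θ : ℝ, 1 < θ → ∀ r > 0,
      (1 / 288 : ℝ) * θ⁻¹ ^ 2 * (r⁻¹ * ∫ x in (0 : ℝ)..r, (y x)⁻¹)⁻¹ ≤
        ((θ * r)⁻¹ * ∫ x in (0 : ℝ)..(θ * r), (y x)⁻¹)⁻¹ ∧
      ((θ * r)⁻¹ * ∫ x in (0 : ℝ)..(θ * r), (y x)⁻¹)⁻¹ ≤
        192 * (r⁻¹ * ∫ x in (0 : ℝ)..r, (y x)⁻¹)⁻¹ := by
  intro θ hθ r hr
  have hθ0 : 0 < θ := by linarith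
  have hH := harmonicMean_pos hypos hint hr
  have hlow := mul_harmonicMean_le hypos hint hθ0 (by positivity)
    (fun x hx => (hdoub θ hθ x hx).1) hr
  have hup := harmonicMean_mul_le hypos hint hθ0 two_pos (fun x hx => (hdoub θ hθ x hx).2) hr
  change 1 / 288 * θ⁻¹ ^ 2 * harmonicMean y r ≤ harmonicMean y (θ * r) ∧
    harmonicMean y (θ * r) ≤ 192 * harmonicMean y r
  refine ⟨le_trans ?_ hlow, by linarith⟩
  rw [mul_inv, inv_pow]
  gcongr
  norm_num

/-- Under the doubling hypotheses on `y`, the regularized function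
`ẏ(r) = (r⁻¹ ∫₀^r y(x)⁻¹ dx)⁻¹` satisfies `(1/288)·θ⁻² ẏ(r) ≤ ẏ(θr) ≤ 192 ẏ(r)`
for all `θ > 1` and `r > 0`. -/
theorem regularized_doubling
    (y : ℝ → ℝ) (hypos : ∀ r > 0, 0 < y r) (hmeas : Measurable y)
    (hint : ∀ r > 0, IntervalIntegrable (fun x => (y x)⁻¹) MeasureTheory.volume 0 r)
    (hdoub : ∀ θ : ℝ, 1 < θ → ∀ r > 0,
      (3 * θ ^ 2)⁻¹ * y r ≤ y (θ * r) ∧ y (θ * r) ≤ 2 * y r) :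
    ∀ θ : ℝ, 1 < θ → ∀ r > 0,
      (1 / 288 : ℝ) * θ⁻¹ ^ 2 * (r⁻¹ * ∫ x in (0 : ℝ)..r, (y x)⁻¹)⁻¹ ≤
        ((θ * r)⁻¹ * ∫ x in (0 : ℝ)..(θ * r), (y x)⁻¹)⁻¹ ∧
      ((θ * r)⁻¹ * ∫ x in (0 : ℝ)..(θ * r), (y x)⁻¹)⁻¹ ≤
        192 * (r⁻¹ * ∫ x in (0 : ℝ)..r, (y x)⁻¹)⁻¹ :=
  regularized_doubling_general y hypos hint hdoub
end

section
/- Suppose e is a moderate function with e(t₂)/e(t₁) ≤ ρ(t₂/t₁)^σ for 0 < t₁ < t₂, and y : [0,∞) → [0,∞) is nondecreasing continuous with y(n) = m for some n > 0, m > 0. Suppose a random variable T satisfies P(T ≥ t) ≤ A·y(t)^{-k/2} for all t > 0, where k is an integer with k > 2σ. Then E[e(y(T))] ≤ e(m)(1 + C'/δ) where δ = k/(2σ) − 1 and C' = A ρ^{1+δ} m^{-k/2}. -/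
/-!
Since `y` is continuous and starts at `0`, every level `c > 0` it reaches is reached first at
some `t > 0`, and `{c ≤ y ∘ T} = {t ≤ T}`; so `y(T)` inherits the tail `A c^{-k/2}`. Inverting the
moderate growth of `e` above `m` shows that `e(y(T)) > t > e(m)` forces
`y(T) ≥ m (t / (ρ e(m)))^{1/σ}`, hence `P(e(y(T)) > t) ≤ C' (e(m) / t)^{1+δ}`. The layer cake
formula then bounds the expectation by `e(m)` (the part below `e(m)`) plus
`∫_{e(m)}^∞ C' (e(m)/t)^{1+δ} dt = e(m) C' / δ`.
-/

open MeasureTheory Set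

def IsModerate (e : ℝ → ℝ) (ρ σ : ℝ) : Prop :=
  ∀ t₁ t₂ : ℝ, 0 < t₁ → t₁ < t₂ → e t₂ / e t₁ ≤ ρ * (t₂ / t₁) ^ σ

theorem IsModerate.mul_rpow_inv_le_of_lt_apply {e : ℝ → ℝ} {ρ σ m t x : ℝ}
    (he_mod : IsModerate e ρ σ) (he_mono : Monotone e) (hρ : 0 < ρ) (hσ : 0 < σ) (hm : 0 < m)
    (hem : 0 < e m) (ht : e m ≤ t) (hx : t < e x) :
    m * (t / (ρ * e m)) ^ σ⁻¹ ≤ x := by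
  have hmx : m < x := lt_of_not_ge fun h => (he_mono h).not_gt (ht.trans_lt hx)
  have hratio : t / (ρ * e m) ≤ (x / m) ^ σ := by
    have := he_mod m x hm hmx
    rw [div_le_iff₀ hem] at this
    rw [div_le_iff₀ (by positivity)]
    nlinarith
  calc m * (t / (ρ * e m)) ^ σ⁻¹ ≤ m * ((x / m) ^ σ) ^ σ⁻¹ := by
        gcongr
        exact div_nonneg (hem.le.trans ht) (by positivity)
    _ = x := by
        rw [Real.rpow_rpow_inv (div_pos (hm.trans hmx) hm).le hσ.ne', mul_div_cancel₀ _ hm.ne']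

theorem exists_pos_apply_eq_and_le_apply_iff {y : ℝ → ℝ} (hy_mono : Monotone y)
    (hy_cont : Continuous y) (hy0 : y 0 = 0) {c t₀ : ℝ} (hc : 0 < c) (ht₀ : c ≤ y t₀) :
    ∃ t, 0 < t ∧ y t = c ∧ ∀ s, c ≤ y s ↔ t ≤ s := by
  have pos_of_le {s : ℝ} (hs : c ≤ y s) : 0 < s := by
    by_contra! h
    linarith [hy0 ▸ hy_mono h]
  have hbdd : BddBelow {s | c ≤ y s} := ⟨0, fun s hs => (pos_of_le hs).le⟩
  set t := sInf {s | c ≤ y s}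
  have ht : c ≤ y t := (isClosed_le continuous_const hy_cont).csInf_mem ⟨t₀, ht₀⟩ hbdd
  obtain ⟨s, hs, hys⟩ := intermediate_value_Icc (pos_of_le ht).le hy_cont.continuousOn
    (show c ∈ Icc (y 0) (y t) by rw [hy0]; exact ⟨hc.le, ht⟩)
  have hst : s = t := le_antisymm hs.2 (csInf_le hbdd hys.ge)
  exact ⟨t, pos_of_le ht, hst ▸ hys,
    fun s => ⟨fun h => csInf_le hbdd h, fun h => ht.trans (hy_mono h)⟩⟩

theorem lintegral_Ioi_ofReal_div_rpow {a p : ℝ} (ha : 0 < a) (hp : 1 < p) :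
    ∫⁻ t in Ioi a, ENNReal.ofReal ((a / t) ^ p) = ENNReal.ofReal (a / (p - 1)) := by
  have hform : EqOn (fun t => (a / t) ^ p) (fun t => a ^ p * t ^ (-p)) (Ioi a) := fun t ht => by
    have : 0 < t := ha.trans ht
    dsimp only
    rw [Real.div_rpow ha.le this.le, Real.rpow_neg this.le, div_eq_mul_inv]
  have hint : IntegrableOn (fun t => a ^ p * t ^ (-p)) (Ioi a) :=
    (integrableOn_Ioi_rpow_of_lt (by linarith) ha).const_mul _
  rw [← ofReal_integral_eq_lintegral_ofReal (hint.congr_fun hform.symm measurableSet_Ioi)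
    (ae_restrict_of_forall_mem measurableSet_Ioi fun t ht => by
      have : 0 < t := ha.trans ht; positivity),
    setIntegral_congr_fun measurableSet_Ioi hform, integral_const_mul,
    integral_Ioi_rpow_of_lt (by linarith) ha]
  congr 1
  rw [← neg_div_neg_eq, neg_neg, neg_add', neg_neg, mul_div_assoc', ← Real.rpow_add ha]
  norm_num

section Tail

variable {Ω : Type*} [MeasurableSpace Ω] (μ : Measure Ω)

theorem lintegral_ofReal_eq_lintegral_meas_lt {f : Ω → ℝ} (hf : AEMeasurable f μ) :
    ∫⁻ ω, ENNReal.ofReal (f ω) ∂μ = ∫⁻ t in Ioi 0, μ {ω | t < f ω} := by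
  have hpos : ∫⁻ ω, ENNReal.ofReal (max (f ω) 0) ∂μ =
      ∫⁻ t in Ioi 0, μ {ω | t < max (f ω) 0} :=
    lintegral_eq_lintegral_meas_lt μ (ae_of_all _ fun _ => le_max_right _ _)
      (hf.max aemeasurable_const)
  simp only [ENNReal.ofReal_max, ENNReal.ofReal_zero, max_zero] at hpos
  rw [hpos]
  refine setLIntegral_congr_fun measurableSet_Ioi fun t ht => ?_
  simp only [lt_max_iff, not_lt_of_gt (mem_Ioi.mp ht), or_false]

theorem lintegral_ofReal_le_of_measureReal_lt_le_rpow [IsProbabilityMeasure μ] {f : Ω → ℝ}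
    (hf : AEMeasurable f μ) {a p K : ℝ} (ha : 0 < a) (hp : 1 < p) (hK : 0 ≤ K)
    (htail : ∀ t : ℝ, a < t → μ.real {ω | t < f ω} ≤ K * (a / t) ^ p) :
    ∫⁻ ω, ENNReal.ofReal (f ω) ∂μ ≤ ENNReal.ofReal (a * (1 + K / (p - 1))) := by
  have hbulk : ∫⁻ t in Ioc 0 a, μ {ω | t < f ω} ≤ ENNReal.ofReal a :=
    calc ∫⁻ t in Ioc 0 a, μ {ω | t < f ω} ≤ ∫⁻ _ in Ioc 0 a, 1 :=
          lintegral_mono fun _ => prob_le_one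
      _ = ENNReal.ofReal a := by rw [setLIntegral_one, Real.volume_Ioc, sub_zero]
  have hfar : ∫⁻ t in Ioi a, μ {ω | t < f ω} ≤ ENNReal.ofReal (K * (a / (p - 1))) :=
    calc ∫⁻ t in Ioi a, μ {ω | t < f ω}
        ≤ ∫⁻ t in Ioi a, ENNReal.ofReal K * ENNReal.ofReal ((a / t) ^ p) :=
          setLIntegral_mono' measurableSet_Ioi fun t ht => by
            rw [← ENNReal.ofReal_mul hK, ← ofReal_measureReal]
            exact ENNReal.ofReal_le_ofReal (htail t ht)
      _ = ENNReal.ofReal (K * (a / (p - 1))) := by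
          rw [lintegral_const_mul _ (by fun_prop), lintegral_Ioi_ofReal_div_rpow ha hp,
            ← ENNReal.ofReal_mul hK]
  have hp' : 0 < p - 1 := sub_pos.mpr hp
  calc ∫⁻ ω, ENNReal.ofReal (f ω) ∂μ
      = (∫⁻ t in Ioc 0 a, μ {ω | t < f ω}) + ∫⁻ t in Ioi a, μ {ω | t < f ω} := by
        rw [lintegral_ofReal_eq_lintegral_meas_lt μ hf, ← Ioc_union_Ioi_eq_Ioi ha.le,
          lintegral_union measurableSet_Ioi (Ioc_disjoint_Ioi le_rfl)]
    _ ≤ ENNReal.ofReal a + ENNReal.ofReal (K * (a / (p - 1))) := add_le_add hbulk hfar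
    _ = ENNReal.ofReal (a * (1 + K / (p - 1))) := by
        rw [← ENNReal.ofReal_add ha.le (by positivity)]
        congr 1
        ring

theorem measureReal_le_comp_le_of_tail {y : ℝ → ℝ} (hy_mono : Monotone y)
    (hy_cont : Continuous y) (hy0 : y 0 = 0) {T : Ω → ℝ} {F : ℝ → ℝ}
    (htail : ∀ t : ℝ, 0 < t → μ.real {ω | t ≤ T ω} ≤ F (y t))
    {c : ℝ} (hc : 0 < c) (hFc : 0 ≤ F c) :
    μ.real {ω | c ≤ y (T ω)} ≤ F c := by
  by_cases hreach : ∃ t₀, c ≤ y t₀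
  · obtain ⟨t₀, ht₀⟩ := hreach
    obtain ⟨t, ht, hyt, hiff⟩ := exists_pos_apply_eq_and_le_apply_iff hy_mono hy_cont hy0 hc ht₀
    simpa only [hiff, hyt] using htail t ht
  · have hempty : {ω | c ≤ y (T ω)} = ∅ :=
      eq_empty_of_forall_notMem fun ω hω => hreach ⟨T ω, hω⟩
    rwa [hempty, measureReal_empty]

theorem IsModerate.measureReal_lt_comp_le [IsFiniteMeasure μ] {e : ℝ → ℝ} {ρ σ m : ℝ}
    (he_mod : IsModerate e ρ σ) (he_mono : Monotone e) (hρ : 0 < ρ) (hσ : 0 < σ) (hm : 0 < m)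
    (hem : 0 < e m) {X : Ω → ℝ} {A q : ℝ}
    (hX : ∀ c : ℝ, 0 < c → μ.real {ω | c ≤ X ω} ≤ A * c ^ (-q)) {t : ℝ} (ht : e m < t) :
    μ.real {ω | t < e (X ω)} ≤ A * ρ ^ (q / σ) * m ^ (-q) * (e m / t) ^ (q / σ) := by
  have ht_pos : 0 < t := hem.trans ht
  set u := t / (ρ * e m)
  have hu : 0 < u := by positivity
  calc μ.real {ω | t < e (X ω)} ≤ μ.real {ω | m * u ^ σ⁻¹ ≤ X ω} :=
        measureReal_mono fun ω hω =>
          he_mod.mul_rpow_inv_le_of_lt_apply he_mono hρ hσ hm hem ht.le hω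
    _ ≤ A * (m * u ^ σ⁻¹) ^ (-q) := hX _ (by positivity)
    _ = A * ρ ^ (q / σ) * m ^ (-q) * (e m / t) ^ (q / σ) := by
        have hu_inv : u⁻¹ = ρ * (e m / t) := by simp only [u]; field_simp
        rw [Real.mul_rpow hm.le (by positivity), ← Real.rpow_mul hu.le,
          show σ⁻¹ * -q = -(q / σ) by ring, Real.rpow_neg hu.le, ← Real.inv_rpow hu.le, hu_inv,
          Real.mul_rpow hρ.le (by positivity)]
        ring

end Tail

theorem expectation_bound_of_tail_general
    {Ω : Type*} [MeasurableSpace Ω] (P : Measure Ω) [IsProbabilityMeasure P]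
    (ρ σ : ℝ) (hρ : 0 < ρ) (hσ : 0 < σ)
    (e : ℝ → ℝ) (he_mono : Monotone e) (he_pos : ∀ t > 0, 0 < e t)
    (he_mod : ∀ t₁ t₂ : ℝ, 0 < t₁ → t₁ < t₂ → e t₂ / e t₁ ≤ ρ * (t₂ / t₁) ^ σ)
    (y : ℝ → ℝ) (hy_mono : Monotone y) (hy_cont : Continuous y)
    (hy0 : y 0 = 0)
    (m : ℝ) (hm : 0 < m)
    (k : ℕ) (hk : 2 * σ < (k : ℝ))
    (A : ℝ) (hA : 0 ≤ A)
    (T : Ω → ℝ) (hT_meas : Measurable T)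
    (htail : ∀ t : ℝ, 0 < t → (P {ω | t ≤ T ω}).toReal ≤ A * (y t) ^ (-(k : ℝ) / 2)) :
    ∫⁻ ω, ENNReal.ofReal (e (y (T ω))) ∂P ≤
      ENNReal.ofReal (e m * (1 +
        (A * ρ ^ (1 + ((k : ℝ) / (2 * σ) - 1)) * m ^ (-(k : ℝ) / 2)) /
          ((k : ℝ) / (2 * σ) - 1))) := by
  have hp : 1 < (k : ℝ) / 2 / σ := by rw [div_div, one_lt_div (by positivity)]; exact hk
  rw [add_sub_cancel, ← div_div, neg_div]
  simp only [neg_div] at htail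
  have htail_yT (c : ℝ) (hc : 0 < c) : P.real {ω | c ≤ y (T ω)} ≤ A * c ^ (-((k : ℝ) / 2)) :=
    measureReal_le_comp_le_of_tail P hy_mono hy_cont hy0
      (F := fun c => A * c ^ (-((k : ℝ) / 2))) htail hc (by positivity)
  exact lintegral_ofReal_le_of_measureReal_lt_le_rpow P
    (he_mono.measurable.comp (hy_cont.measurable.comp hT_meas)).aemeasurable (he_pos m hm) hp
    (by positivity) fun t ht =>
      IsModerate.measureReal_lt_comp_le P he_mod he_mono hρ hσ hm (he_pos m hm) htail_yT ht

/-- If `e` is moderate with constants `(ρ, σ)`, `y` is nondecreasing continuous with `y(n) = m`,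
and `T ≥ 0` satisfies the tail bound `P(T ≥ t) ≤ A·y(t)^{-k/2}` with `k > 2σ`, then
`E[e(y(T))] ≤ e(m)(1 + C'/δ)` where `δ = k/(2σ) − 1` and `C' = A ρ^{1+δ} m^{-k/2}`. -/
theorem expectation_bound_of_tail
    {Ω : Type*} [MeasurableSpace Ω] (P : Measure Ω) [IsProbabilityMeasure P]
    (ρ σ : ℝ) (hρ : 0 < ρ) (hσ : 0 < σ)
    (e : ℝ → ℝ) (he_mono : Monotone e) (he_pos : ∀ t > 0, 0 < e t)
    (he_mod : ∀ t₁ t₂ : ℝ, 0 < t₁ → t₁ < t₂ → e t₂ / e t₁ ≤ ρ * (t₂ / t₁) ^ σ)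
    (y : ℝ → ℝ) (hy_mono : Monotone y) (hy_cont : Continuous y)
    (hy0 : y 0 = 0) (hy_pos : ∀ t > 0, 0 < y t)
    (n m : ℝ) (hn : 0 < n) (hm : 0 < m) (hym : y n = m)
    (k : ℕ) (hk : 2 * σ < (k : ℝ))
    (A : ℝ) (hA : 0 ≤ A)
    (T : Ω → ℝ) (hT_meas : Measurable T) (hT_nonneg : ∀ ω, 0 ≤ T ω)
    (htail : ∀ t : ℝ, 0 < t → (P {ω | t ≤ T ω}).toReal ≤ A * (y t) ^ (-(k : ℝ) / 2)) :
    ∫⁻ ω, ENNReal.ofReal (e (y (T ω))) ∂P ≤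
      ENNReal.ofReal (e m * (1 +
        (A * ρ ^ (1 + ((k : ℝ) / (2 * σ) - 1)) * m ^ (-(k : ℝ) / 2)) /
          ((k : ℝ) / (2 * σ) - 1))) :=
  expectation_bound_of_tail_general P ρ σ hρ hσ e he_mono he_pos he_mod y hy_mono hy_cont hy0 m hm k
    hk A hA T hT_meas htail
end

section
/- Suppose e is moderate with constants (γ, θ): e(t₂)/e(t₁) ≤ γ(t₂/t₁)^θ for 0 < t₁ < t₂, and T ≥ 0 is a random variable satisfying P(T ≥ t) ≤ A (c t / n)^{-kσ/2} for all t ≥ n, where n > 0, c > 0, σ > 0 are constants and k is an integer with kσ/2 > θ. Then E[e(T)] ≤ e(n) + C e(n) / δ where δ = kσ/(2θ) − 1 and C depends only on A, γ, c, k, σ, θ. -/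
/-!
Moderate growth gives `e T ≤ e n + γ e n f` with `f = (max T n / n) ^ θ`, so it suffices to bound
`E[f]`. For `t > 1` the event `f > t` forces `T ≥ n t ^ (1/θ)`, whose probability is at most
`A c ^ (-kσ/2) t ^ (-q)` with `q = kσ/(2θ) > 1`; the layer-cake formula, split at `t = 1`, then
gives `E[f] ≤ 1 + A c ^ (-kσ/2) / (q - 1)`.
-/

open MeasureTheory Set

theorem le_add_mul_rpow_max_div_of_moderate {e : ℝ → ℝ} {γ θ n : ℝ} (hγ : 0 ≤ γ)
    (he_mono : Monotone e) (hen : 0 < e n)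
    (he_mod : ∀ t, n < t → e t / e n ≤ γ * (t / n) ^ θ) (hn : 0 < n) (x : ℝ) :
    e x ≤ e n + γ * e n * (max x n / n) ^ θ := by
  rcases le_or_gt x n with hxn | hnx
  · rw [max_eq_right hxn, div_self hn.ne', Real.one_rpow, mul_one]
    linarith [he_mono hxn, mul_nonneg hγ hen.le]
  · have := (div_le_iff₀ hen).1 (he_mod x hnx)
    rw [max_eq_left hnx.le]
    nlinarith [Real.rpow_nonneg (div_nonneg (hn.trans hnx).le hn.le) θ]

theorem mul_rpow_inv_le_of_lt_rpow_max_div {x n t θ : ℝ} (hn : 0 < n) (hθ : 0 < θ)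
    (ht : 1 ≤ t) (h : t < (max x n / n) ^ θ) : n * t ^ θ⁻¹ ≤ x := by
  have hmax : 0 ≤ max x n / n := div_nonneg (hn.le.trans (le_max_right x n)) hn.le
  have hlt : n * t ^ θ⁻¹ < max x n := by
    rw [← lt_div_iff₀' hn]
    exact (Real.rpow_inv_lt_iff_of_pos (by linarith) hmax hθ).2 h
  have hge : n ≤ n * t ^ θ⁻¹ := le_mul_of_one_le_right hn.le (Real.one_le_rpow ht (by positivity))
  rcases lt_max_iff.1 hlt with h | h
  · exact h.le
  · linarith

theorem lintegral_Ioi_one_ofReal_mul_rpow {B q : ℝ} (hB : 0 ≤ B) (hq : 1 < q) :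
    ∫⁻ t in Ioi (1 : ℝ), ENNReal.ofReal (B * t ^ (-q)) = ENNReal.ofReal (B / (q - 1)) := by
  have hint : IntegrableOn (fun t : ℝ ↦ B * t ^ (-q)) (Ioi 1) :=
    (integrableOn_Ioi_rpow_of_lt (by linarith) one_pos).const_mul _
  rw [← ofReal_integral_eq_lintegral_ofReal hint, integral_const_mul,
    integral_Ioi_rpow_of_lt (by linarith) one_pos, Real.one_rpow]
  · congr 1
    rw [show -q + 1 = -(q - 1) by ring, div_neg, neg_div, neg_neg, mul_one_div]
  · filter_upwards [self_mem_ae_restrict measurableSet_Ioi] with t ht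
    have : (0 : ℝ) < t := one_pos.trans ht
    positivity

theorem lintegral_ofReal_le_of_meas_lt_le_rpow {Ω : Type*} [MeasurableSpace Ω] {μ : Measure Ω}
    {f : Ω → ℝ} {B q : ℝ} (hf : Measurable f) (hf_nonneg : ∀ ω, 0 ≤ f ω) (hB : 0 ≤ B)
    (hq : 1 < q) (htail : ∀ t, 1 < t → μ {ω | t < f ω} ≤ ENNReal.ofReal (B * t ^ (-q))) :
    ∫⁻ ω, ENNReal.ofReal (f ω) ∂μ ≤ μ univ + ENNReal.ofReal (B / (q - 1)) := by
  rw [lintegral_eq_lintegral_meas_lt μ (.of_forall hf_nonneg) hf.aemeasurable,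
    ← Ioc_union_Ioi_eq_Ioi zero_le_one, lintegral_union measurableSet_Ioi Ioc_disjoint_Ioi_same]
  gcongr
  · calc ∫⁻ t in Ioc (0 : ℝ) 1, μ {ω | t < f ω}
        ≤ ∫⁻ _ in Ioc (0 : ℝ) 1, μ univ := lintegral_mono fun _ ↦ measure_mono (subset_univ _)
      _ = μ univ := by simp
  · calc ∫⁻ t in Ioi (1 : ℝ), μ {ω | t < f ω}
        ≤ ∫⁻ t in Ioi (1 : ℝ), ENNReal.ofReal (B * t ^ (-q)) :=
          setLIntegral_mono (by fun_prop) htail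
      _ = ENNReal.ofReal (B / (q - 1)) := lintegral_Ioi_one_ofReal_mul_rpow hB hq

theorem meas_lt_rpow_max_div_le {Ω : Type*} [MeasurableSpace Ω] {P : Measure Ω}
    [IsFiniteMeasure P] {T : Ω → ℝ} {A c n p θ : ℝ} (hc : 0 < c) (hn : 0 < n) (hθ : 0 < θ)
    (htail : ∀ t, n ≤ t → (P {ω | t ≤ T ω}).toReal ≤ A * (c * t / n) ^ (-p))
    {t : ℝ} (ht : 1 ≤ t) :
    P {ω | t < (max (T ω) n / n) ^ θ} ≤ ENNReal.ofReal (A * c ^ (-p) * t ^ (-(p / θ))) := by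
  have ht₀ : 0 ≤ t := zero_le_one.trans ht
  have hs : n ≤ n * t ^ θ⁻¹ :=
    le_mul_of_one_le_right hn.le (Real.one_le_rpow ht (by positivity))
  have hrescale : (c * (n * t ^ θ⁻¹) / n) ^ (-p) = c ^ (-p) * t ^ (-(p / θ)) := by
    rw [mul_div_assoc, mul_div_cancel_left₀ _ hn.ne', Real.mul_rpow hc.le (by positivity),
      ← Real.rpow_mul ht₀]
    ring_nf
  calc P {ω | t < (max (T ω) n / n) ^ θ}
      ≤ P {ω | n * t ^ θ⁻¹ ≤ T ω} :=
        measure_mono fun ω ↦ mul_rpow_inv_le_of_lt_rpow_max_div hn hθ ht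
    _ = ENNReal.ofReal (P {ω | n * t ^ θ⁻¹ ≤ T ω}).toReal := (ENNReal.ofReal_toReal (by simp)).symm
    _ ≤ ENNReal.ofReal (A * c ^ (-p) * t ^ (-(p / θ))) := by
        rw [mul_assoc, ← hrescale]
        exact ENNReal.ofReal_le_ofReal (htail _ hs)

theorem moment_bound_of_polynomial_tail_general
    (A γ c σ θ : ℝ) (hA : 0 ≤ A) (hγ : 0 < γ) (hc : 0 < c) (hθ : 0 < θ)
    (k : ℕ) (hk : 2 * θ < (k : ℝ) * σ) :
    ∃ C > (0 : ℝ),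
      ∀ {Ω : Type} [MeasurableSpace Ω] (P : Measure Ω), IsProbabilityMeasure P →
      ∀ (e : ℝ → ℝ), Monotone e → (∀ t > 0, 0 < e t) →
        (∀ t₁ t₂ : ℝ, 0 < t₁ → t₁ < t₂ → e t₂ / e t₁ ≤ γ * (t₂ / t₁) ^ θ) →
      ∀ (n : ℝ), 0 < n →
      ∀ (T : Ω → ℝ), Measurable T → (∀ ω, 0 ≤ T ω) →
        (∀ t : ℝ, n ≤ t →
          (P {ω | t ≤ T ω}).toReal ≤ A * (c * t / n) ^ (-(k : ℝ) * σ / 2)) →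
        ∫⁻ ω, ENNReal.ofReal (e (T ω)) ∂P ≤
          ENNReal.ofReal (e n + C * e n / ((k : ℝ) * σ / (2 * θ) - 1)) := by
  set p : ℝ := (k : ℝ) * σ / 2
  set q : ℝ := (k : ℝ) * σ / (2 * θ)
  have hq : 0 < q - 1 := sub_pos.2 ((one_lt_div (by positivity)).2 hk)
  have hpq : p / θ = q := div_div _ _ _
  refine ⟨γ * (q - 1) + γ * A * c ^ (-p), by positivity, ?_⟩
  intro Ω _ P _ e he_mono he_pos he_mod n hn T hT _ htail
  simp only [neg_mul, neg_div] at htail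
  set f : Ω → ℝ := fun ω ↦ (max (T ω) n / n) ^ θ
  have hen : 0 < e n := he_pos n hn
  have hf_int : ∫⁻ ω, ENNReal.ofReal (f ω) ∂P ≤ 1 + ENNReal.ofReal (A * c ^ (-p) / (q - 1)) := by
    rw [← measure_univ (μ := P)]
    exact lintegral_ofReal_le_of_meas_lt_le_rpow (by fun_prop) (fun ω ↦ by positivity)
      (by positivity) (sub_pos.1 hq) fun t ht ↦ hpq ▸ meas_lt_rpow_max_div_le hc hn hθ htail ht.le
  calc ∫⁻ ω, ENNReal.ofReal (e (T ω)) ∂P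
      ≤ ∫⁻ ω, ENNReal.ofReal (e n) + ENNReal.ofReal (γ * e n) * ENNReal.ofReal (f ω) ∂P := by
        refine lintegral_mono fun ω ↦ ?_
        rw [← ENNReal.ofReal_mul (by positivity), ← ENNReal.ofReal_add hen.le (by positivity)]
        exact ENNReal.ofReal_le_ofReal <| le_add_mul_rpow_max_div_of_moderate hγ.le he_mono hen
          (fun t ht ↦ he_mod n t hn ht) hn _
    _ = ENNReal.ofReal (e n) + ENNReal.ofReal (γ * e n) * ∫⁻ ω, ENNReal.ofReal (f ω) ∂P := by
        rw [lintegral_add_left measurable_const, lintegral_const_mul _ (by fun_prop),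
          lintegral_const, measure_univ, mul_one]
    _ ≤ ENNReal.ofReal (e n) + ENNReal.ofReal (γ * e n) *
          (1 + ENNReal.ofReal (A * c ^ (-p) / (q - 1))) := by gcongr
    _ = ENNReal.ofReal (e n + (γ * (q - 1) + γ * A * c ^ (-p)) * e n / (q - 1)) := by
        rw [← ENNReal.ofReal_one, ← ENNReal.ofReal_add zero_le_one (by positivity),
          ← ENNReal.ofReal_mul (by positivity), ← ENNReal.ofReal_add hen.le (by positivity)]
        congr 1
        field_simp

/-- If `e` is moderate with constants `(γ, θ)` and `T ≥ 0` satisfies the tail bound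
`P(T ≥ t) ≤ A (c t / n)^{-kσ/2}` for `t ≥ n`, where `kσ/2 > θ`, then
`E[e(T)] ≤ e(n) + C e(n)/δ` with `δ = kσ/(2θ) − 1` and `C` depending only on
`A, γ, c, k, σ, θ`. -/
theorem moment_bound_of_polynomial_tail
    (A γ c σ θ : ℝ) (hA : 0 ≤ A) (hγ : 0 < γ) (hc : 0 < c) (hσ : 0 < σ) (hθ : 0 < θ)
    (k : ℕ) (hk : 2 * θ < (k : ℝ) * σ) :
    ∃ C > (0 : ℝ),
      ∀ {Ω : Type} [MeasurableSpace Ω] (P : Measure Ω), IsProbabilityMeasure P →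
      ∀ (e : ℝ → ℝ), Monotone e → (∀ t > 0, 0 < e t) →
        (∀ t₁ t₂ : ℝ, 0 < t₁ → t₁ < t₂ → e t₂ / e t₁ ≤ γ * (t₂ / t₁) ^ θ) →
      ∀ (n : ℝ), 0 < n →
      ∀ (T : Ω → ℝ), Measurable T → (∀ ω, 0 ≤ T ω) →
        (∀ t : ℝ, n ≤ t →
          (P {ω | t ≤ T ω}).toReal ≤ A * (c * t / n) ^ (-(k : ℝ) * σ / 2)) →
        ∫⁻ ω, ENNReal.ofReal (e (T ω)) ∂P ≤
          ENNReal.ofReal (e n + C * e n / ((k : ℝ) * σ / (2 * θ) - 1)) :=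
  moment_bound_of_polynomial_tail_general A γ c σ θ hA hγ hc hθ k hk
end
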